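/- Let f = (f_j)_{j<n} and h = (h_j)_{j<k} be tuples of functions from a set I to a set M, and let fh denote the concatenated tuple of length n + k. Then π(h) is a regular subalgebra of π(fh): whenever a family of members of π(h) has a least upper bound within the ordered set π(h), that set is also a least upper bound of the family within the ordered set π(fh). -/

import Mathlib

/-- `𝒜` is a field of sets on `α`: it contains `∅` and `α` and is closed under finite unions,
finite intersections and complements. -/
def IsSetField {α : Type*} (𝒜 : Set (Set α)) : Prop :=
  ∅ ∈ 𝒜 ∧ Set.univ ∈ 𝒜 ∧ (∀ A ∈ 𝒜, ∀ B ∈ 𝒜, A ∪ B ∈ 𝒜) ∧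
    (∀ A ∈ 𝒜, ∀ B ∈ 𝒜, A ∩ B ∈ 𝒜) ∧ (∀ A ∈ 𝒜, Aᶜ ∈ 𝒜)

/-- The field of sets on `α` generated by the family `G`. -/
def genSetField {α : Type*} (G : Set (Set α)) : Set (Set α) :=
  ⋂₀ {𝒜 | IsSetField 𝒜 ∧ G ⊆ 𝒜}

/-- The finite–cofinite field of sets on `M`. -/
def finCofin (M : Type*) : Set (Set M) :=
  {A : Set M | A.Finite ∨ Aᶜ.Finite}

/-- The `n`-th product of the finite–cofinite field on `M`: the field of sets on `M^n`
generated by products of members of the finite–cofinite field. -/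
def prodFinCofin (M : Type*) (n : ℕ) : Set (Set (Fin n → M)) :=
  genSetField {S : Set (Fin n → M) |
    ∃ A : Fin n → Set M, (∀ i, A i ∈ finCofin M) ∧ S = {x | ∀ i, x i ∈ A i}}

/-- The Boolean algebra (field of sets on `I`) generated by a tuple of functions from `I`
to `M`, viewed as a single function `f : I → M^n`. -/
def pialg {I M : Type*} {n : ℕ} (f : I → Fin n → M) : Set (Set I) :=
  {S : Set I | ∃ A ∈ prodFinCofin M n, S = f ⁻¹' A}

/-- `C` is a least upper bound of the family `𝒯` within the subalgebra `S` of the power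
set of `I` (ordered by inclusion). -/
def LubIn {I : Type*} (S 𝒯 : Set (Set I)) (C : Set I) : Prop :=
  C ∈ S ∧ (∀ T ∈ 𝒯, T ⊆ C) ∧ ∀ U ∈ S, (∀ T ∈ 𝒯, T ⊆ U) → C ⊆ U

/-!
Every set in `π(g)` is a union of fibres of `g`, and the complement of a single fibre is in
`π(g)` because a point of `M^k` is a product of singletons. So if `x ∈ C` lay in no member of
`𝒯`, removing the fibre through `x` from `C` would give a smaller upper bound in `π(g)`.
Hence the supremum `C` of `𝒯` in `π(h)` is the union `⋃₀ 𝒯`, which is its supremum in any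
family of sets containing `C`; and `C ∈ π(fh)` since `π(h)` is the pullback of `π(fh)` along
the projection onto the last `k` coordinates.
-/

open Set

section SetField

variable {α β : Type*}

lemma subset_genSetField (G : Set (Set α)) : G ⊆ genSetField G :=
  fun _ hs _ h𝒜 => h𝒜.2 hs

lemma genSetField_subset {G 𝒜 : Set (Set α)} (h𝒜 : IsSetField 𝒜) (hG : G ⊆ 𝒜) :
    genSetField G ⊆ 𝒜 :=
  fun _ hs => hs 𝒜 ⟨h𝒜, hG⟩

lemma isSetField_genSetField (G : Set (Set α)) : IsSetField (genSetField G) :=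
  ⟨fun _ h𝒜 => h𝒜.1.1, fun _ h𝒜 => h𝒜.1.2.1,
    fun A hA B hB 𝒜 h𝒜 => h𝒜.1.2.2.1 A (hA 𝒜 h𝒜) B (hB 𝒜 h𝒜),
    fun A hA B hB 𝒜 h𝒜 => h𝒜.1.2.2.2.1 A (hA 𝒜 h𝒜) B (hB 𝒜 h𝒜),
    fun A hA 𝒜 h𝒜 => h𝒜.1.2.2.2.2 A (hA 𝒜 h𝒜)⟩

lemma IsSetField.comap {ℬ : Set (Set α)} (hℬ : IsSetField ℬ) (p : α → β) :
    IsSetField {A : Set β | p ⁻¹' A ∈ ℬ} := by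
  obtain ⟨h_empty, h_univ, h_union, h_inter, h_compl⟩ := hℬ
  exact ⟨h_empty, h_univ, fun A hA B hB => h_union _ hA _ hB,
    fun A hA B hB => h_inter _ hA _ hB, fun A hA => h_compl _ hA⟩

end SetField

section ProdFinCofin

variable {M : Type*}

lemma univ_mem_finCofin : (univ : Set M) ∈ finCofin M :=
  Or.inr (by simp)

lemma pi_mem_prodFinCofin {n : ℕ} {A : Fin n → Set M} (hA : ∀ i, A i ∈ finCofin M) :
    {x | ∀ i, x i ∈ A i} ∈ prodFinCofin M n :=
  subset_genSetField _ ⟨A, hA, rfl⟩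

lemma singleton_mem_prodFinCofin {n : ℕ} (v : Fin n → M) : {v} ∈ prodFinCofin M n := by
  convert pi_mem_prodFinCofin (A := fun i => {v i}) fun i => Or.inl (finite_singleton _)
  ext x
  simp [funext_iff]

lemma preimage_comp_mem_prodFinCofin {m n : ℕ} {e : Fin n → Fin m} (he : e.Injective)
    {A : Set (Fin n → M)} (hA : A ∈ prodFinCofin M n) :
    (fun z : Fin m → M => z ∘ e) ⁻¹' A ∈ prodFinCofin M m := by
  refine genSetField_subset ((isSetField_genSetField _).comap (fun z : Fin m → M => z ∘ e)) ?_ hA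
  rintro _ ⟨B, hB, rfl⟩
  set B' : Fin m → Set M := Function.extend e B fun _ => univ
  have hB' : ∀ j, B' j ∈ finCofin M := fun j => by
    by_cases hj : ∃ i, e i = j
    · obtain ⟨i, rfl⟩ := hj
      simpa [B', he.extend_apply] using hB i
    · simpa [B', Function.extend_apply' _ _ _ hj] using univ_mem_finCofin
  change (fun z : Fin m → M => z ∘ e) ⁻¹' {x | ∀ i, x i ∈ B i} ∈ prodFinCofin M m
  convert pi_mem_prodFinCofin hB' using 1
  ext z
  simp only [mem_preimage, mem_ofPred_eq, Function.comp_apply]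
  refine ⟨fun hz j => ?_, fun hz i => by simpa [B', he.extend_apply] using hz (e i)⟩
  by_cases hj : ∃ i, e i = j
  · obtain ⟨i, rfl⟩ := hj
    simpa [B', he.extend_apply] using hz i
  · simp [B', Function.extend_apply' _ _ _ hj]

end ProdFinCofin

section Pialg

variable {I M : Type*} {n : ℕ}

lemma pialg_comp_subset {m : ℕ} {e : Fin n → Fin m} (he : e.Injective) (g : I → Fin m → M) :
    pialg (fun x => g x ∘ e) ⊆ pialg g := by
  rintro _ ⟨A, hA, rfl⟩
  exact ⟨_, preimage_comp_mem_prodFinCofin he hA, rfl⟩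

lemma mem_of_mem_pialg_of_eq {g : I → Fin n → M} {T : Set I} (hT : T ∈ pialg g) {x y : I}
    (hy : y ∈ T) (hxy : g x = g y) : x ∈ T := by
  obtain ⟨A, -, rfl⟩ := hT
  simpa [mem_preimage, hxy] using hy

lemma diff_fiber_mem_pialg {g : I → Fin n → M} {C : Set I} (hC : C ∈ pialg g) (x : I) :
    C \ g ⁻¹' {g x} ∈ pialg g := by
  obtain ⟨A, hA, rfl⟩ := hC
  obtain ⟨-, -, -, h_inter, h_compl⟩ : IsSetField (prodFinCofin M n) := isSetField_genSetField _
  exact ⟨A \ {g x}, h_inter _ hA _ (h_compl _ (singleton_mem_prodFinCofin _)), rfl⟩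

lemma LubIn.subset_sUnion_of_pialg {g : I → Fin n → M} {𝒯 : Set (Set I)} {C : Set I}
    (h𝒯 : 𝒯 ⊆ pialg g) (hC : LubIn (pialg g) 𝒯 C) : C ⊆ ⋃₀ 𝒯 := by
  obtain ⟨hC_mem, hC_ub, hC_least⟩ := hC
  intro x hxC
  by_contra hx
  have h_ub : ∀ T ∈ 𝒯, T ⊆ C \ g ⁻¹' {g x} := fun T hT y hyT =>
    ⟨hC_ub T hT hyT, fun hy => hx ⟨T, hT, mem_of_mem_pialg_of_eq (h𝒯 hT) hyT hy.symm⟩⟩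
  exact (hC_least _ (diff_fiber_mem_pialg hC_mem x) h_ub hxC).2 rfl

end Pialg

lemma LubIn.of_subset_sUnion {I : Type*} {S S' 𝒯 : Set (Set I)} {C : Set I}
    (hC : LubIn S 𝒯 C) (h_sUnion : C ⊆ ⋃₀ 𝒯) (hC' : C ∈ S') : LubIn S' 𝒯 C :=
  ⟨hC', hC.2.1, fun _ _ hU => h_sUnion.trans (sUnion_subset hU)⟩

/-- `π(h)` is a regular subalgebra of `π(fh)`, where `fh` is the concatenated tuple. -/
theorem pialg_regular_in_pialg_append
    {I M : Type*} {n k : ℕ} (f : Fin n → I → M) (h : Fin k → I → M) :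
    ∀ 𝒯 ⊆ pialg (fun j i => h i j), ∀ C : Set I,
      LubIn (pialg (fun j i => h i j)) 𝒯 C →
      LubIn (pialg (fun j => Fin.append (fun i => f i j) (fun i => h i j))) 𝒯 C := by
  intro 𝒯 h𝒯 C hC
  have h_proj : (fun j i => h i j) =
      fun j => Fin.append (fun i => f i j) (fun i => h i j) ∘ Fin.natAdd n := by
    funext j i
    simp
  refine hC.of_subset_sUnion (hC.subset_sUnion_of_pialg h𝒯) ?_
  exact pialg_comp_subset (Fin.natAdd_injective k n) _ (h_proj ▸ hC.1)
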